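/- Let κ > 0 and K be real constants with σ := K/κ < 0, let C and D ≠ 0 be real constants, let ε ∈ {+1, −1}, and define φ(u,s) := (1/(2√(−σ)))·[ 1/(ε·√(C + 2√(−σ)·D − u + s²) − s) − 1/(ε·√(C − 2√(−σ)·D − u + s²) − s) ] on an open set where both quantities under the square roots are positive, the denominators are nonzero, and φ > 0. Then φ satisfies the projective PDE (∗): φ₂₂ = 2(φ₁ − s·φ₁₂), and with ψ := (φ₂ + 2s·φ₁)/(2φ) it satisfies κ·[ψ² − (ψ₂ + 2s·ψ₁)] = K·φ². -/

import Mathlib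

/-- First partial derivative of `f = f(u,s)` with respect to the first variable. -/
noncomputable def pd1 (f : ℝ → ℝ → ℝ) (u s : ℝ) : ℝ := deriv (fun t => f t s) u

/-- First partial derivative of `f = f(u,s)` with respect to the second variable. -/
noncomputable def pd2 (f : ℝ → ℝ → ℝ) (u s : ℝ) : ℝ := deriv (f u) s

/-- `ψ := (φ₂ + 2s·φ₁)/(2φ)`. -/
noncomputable def psi (f : ℝ → ℝ → ℝ) (u s : ℝ) : ℝ :=
  (pd2 f u s + 2 * s * pd1 f u s) / (2 * f u s)

/-!
Each term `f = 1/(ε√(c - u + s²) - s)` solves the first-order equation `f₂ + 2s·f₁ = f²` and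
the projective PDE, which is linear. For `φ = a(f - g)` with two such terms this gives
`φ₂ + 2s·φ₁ = φ·(f + g)`, i.e. `ψ = (f + g)/2`, hence `ψ₂ + 2s·ψ₁ = (f² + g²)/2` and
`ψ² - (ψ₂ + 2s·ψ₁) = -(f - g)²/4 = -φ²/(4a²)`. For `a = 1/(2√(-σ))` this is `σ·φ²`.
-/
open Filter Topology

section Slices

variable {P : ℝ × ℝ → Prop} {u s : ℝ}

lemma Filter.Eventually.slice_fst (h : ∀ᶠ p in 𝓝 (u, s), P p) : ∀ᶠ t in 𝓝 u, P (t, s) :=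
  ((Continuous.prodMk_left s).tendsto u).eventually h

lemma Filter.Eventually.slice_snd (h : ∀ᶠ p in 𝓝 (u, s), P p) : ∀ᶠ t in 𝓝 s, P (u, t) :=
  ((Continuous.prodMk_right u).tendsto s).eventually h

end Slices

section PartialDerivatives

variable {f g : ℝ → ℝ → ℝ} {a u s : ℝ}

def SliceDifferentiableAt (f : ℝ → ℝ → ℝ) (u s : ℝ) : Prop :=
  DifferentiableAt ℝ (fun t => f t s) u ∧ DifferentiableAt ℝ (f u) s

noncomputable def transport (f : ℝ → ℝ → ℝ) (u s : ℝ) : ℝ := pd2 f u s + 2 * s * pd1 f u s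

def IsProjectiveAt (f : ℝ → ℝ → ℝ) (u s : ℝ) : Prop :=
  pd2 (pd2 f) u s = 2 * (pd1 f u s - s * pd2 (pd1 f) u s)

/-- Along the characteristics `u - s² = const` of `transport` this is the Riccati equation
`f' = f²`. -/
def IsRiccatiAt (f : ℝ → ℝ → ℝ) (u s : ℝ) : Prop :=
  SliceDifferentiableAt f u s ∧ transport f u s = f u s ^ 2

lemma pd2_congr (h : f u =ᶠ[𝓝 s] g u) : pd2 f u s = pd2 g u s := h.deriv_eq

lemma pd1_const_mul_sub (hf : DifferentiableAt ℝ (fun t => f t s) u)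
    (hg : DifferentiableAt ℝ (fun t => g t s) u) :
    pd1 (fun u s => a * (f u s - g u s)) u s = a * (pd1 f u s - pd1 g u s) :=
  ((hf.hasDerivAt.sub hg.hasDerivAt).const_mul a).deriv

lemma pd2_const_mul_sub (hf : DifferentiableAt ℝ (f u) s) (hg : DifferentiableAt ℝ (g u) s) :
    pd2 (fun u s => a * (f u s - g u s)) u s = a * (pd2 f u s - pd2 g u s) :=
  ((hf.hasDerivAt.sub hg.hasDerivAt).const_mul a).deriv

lemma transport_const_mul_sub (hf : SliceDifferentiableAt f u s)
    (hg : SliceDifferentiableAt g u s) :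
    transport (fun u s => a * (f u s - g u s)) u s = a * (transport f u s - transport g u s) := by
  rw [transport, transport, transport, pd1_const_mul_sub hf.1 hg.1, pd2_const_mul_sub hf.2 hg.2]
  ring

lemma IsProjectiveAt.const_mul_sub (hf : ∀ᶠ p in 𝓝 (u, s), SliceDifferentiableAt f p.1 p.2)
    (hg : ∀ᶠ p in 𝓝 (u, s), SliceDifferentiableAt g p.1 p.2)
    (hf₁ : DifferentiableAt ℝ (pd1 f u) s) (hf₂ : DifferentiableAt ℝ (pd2 f u) s)
    (hg₁ : DifferentiableAt ℝ (pd1 g u) s) (hg₂ : DifferentiableAt ℝ (pd2 g u) s)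
    (hfP : IsProjectiveAt f u s) (hgP : IsProjectiveAt g u s) :
    IsProjectiveAt (fun u s => a * (f u s - g u s)) u s := by
  have hfg := (hf.and hg).slice_snd
  have e₁ : pd1 (fun u s => a * (f u s - g u s)) u =ᶠ[𝓝 s]
      fun t => a * (pd1 f u t - pd1 g u t) :=
    hfg.mono fun t ht => pd1_const_mul_sub ht.1.1 ht.2.1
  have e₂ : pd2 (fun u s => a * (f u s - g u s)) u =ᶠ[𝓝 s]
      fun t => a * (pd2 f u t - pd2 g u t) :=
    hfg.mono fun t ht => pd2_const_mul_sub ht.1.2 ht.2.2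
  rw [IsProjectiveAt, pd2_congr (g := fun u t => a * (pd1 f u t - pd1 g u t)) e₁,
    pd2_congr (g := fun u t => a * (pd2 f u t - pd2 g u t)) e₂, pd2_const_mul_sub hf₁ hg₁,
    pd2_const_mul_sub hf₂ hg₂, e₁.self_of_nhds, hfP, hgP]
  ring

end PartialDerivatives

section Riccati

variable {f g : ℝ → ℝ → ℝ} {a u s : ℝ}

lemma psi_const_mul_sub (hf : IsRiccatiAt f u s) (hg : IsRiccatiAt g u s)
    (hne : a * (f u s - g u s) ≠ 0) :
    psi (fun u s => a * (f u s - g u s)) u s = (f u s + g u s) / 2 := by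
  have ha : a ≠ 0 := left_ne_zero_of_mul hne
  have hfg : f u s - g u s ≠ 0 := right_ne_zero_of_mul hne
  change transport _ u s / _ = _
  rw [transport_const_mul_sub hf.1 hg.1, hf.2, hg.2]
  field_simp
  ring

lemma psi_sq_sub_transport_psi_const_mul_sub (hf : ∀ᶠ p in 𝓝 (u, s), IsRiccatiAt f p.1 p.2)
    (hg : ∀ᶠ p in 𝓝 (u, s), IsRiccatiAt g p.1 p.2) (hne : a * (f u s - g u s) ≠ 0) :
    psi (fun u s => a * (f u s - g u s)) u s ^ 2
        - transport (psi fun u s => a * (f u s - g u s)) u s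
      = -(f u s - g u s) ^ 2 / 4 := by
  obtain ⟨⟨⟨hf₁, hf₂⟩, hfR⟩, ⟨⟨hg₁, hg₂⟩, hgR⟩⟩ : IsRiccatiAt f u s ∧ IsRiccatiAt g u s :=
    (hf.and hg).self_of_nhds
  have e₁ : (fun t => psi (fun u s => a * (f u s - g u s)) t s) =ᶠ[𝓝 u]
      fun t => (f t s + g t s) / 2 := by
    filter_upwards [hf.slice_fst, hg.slice_fst,
      ((hf₁.sub hg₁).const_mul a).continuousAt.eventually_ne hne] with t htf htg hne'
    exact psi_const_mul_sub htf htg hne'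
  have e₂ : psi (fun u s => a * (f u s - g u s)) u =ᶠ[𝓝 s] fun t => (f u t + g u t) / 2 := by
    filter_upwards [hf.slice_snd, hg.slice_snd,
      ((hf₂.sub hg₂).const_mul a).continuousAt.eventually_ne hne] with t htf htg hne'
    exact psi_const_mul_sub htf htg hne'
  have d₁ : HasDerivAt (fun t => (f t s + g t s) / 2) ((pd1 f u s + pd1 g u s) / 2) u :=
    (hf₁.hasDerivAt.add hg₁.hasDerivAt).div_const 2
  have d₂ : HasDerivAt (fun t => (f u t + g u t) / 2) ((pd2 f u s + pd2 g u s) / 2) s :=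
    (hf₂.hasDerivAt.add hg₂.hasDerivAt).div_const 2
  rw [transport, pd1, pd2, e₁.deriv_eq, e₂.deriv_eq, e₂.self_of_nhds, d₁.deriv, d₂.deriv]
  rw [transport] at hfR hgR
  linear_combination (-1 / 2 : ℝ) * (hfR + hgR)

end Riccati

section ShenTerm

variable {ε c u s : ℝ}

noncomputable def shenRoot (c u s : ℝ) : ℝ := √(c - u + s ^ 2)

noncomputable def shenTerm (ε c u s : ℝ) : ℝ := 1 / (ε * shenRoot c u s - s)

def shenDomain (ε c : ℝ) : Set (ℝ × ℝ) :=
  {p | 0 < c - p.1 + p.2 ^ 2 ∧ ε * shenRoot c p.1 p.2 - p.2 ≠ 0}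

lemma isOpen_shenDomain (ε c : ℝ) : IsOpen (shenDomain ε c) := by
  have hq : Continuous fun p : ℝ × ℝ => c - p.1 + p.2 ^ 2 := by fun_prop
  exact (isOpen_lt continuous_const hq).inter
    (isOpen_ne_fun (by unfold shenRoot; fun_prop) continuous_const)

lemma eventually_mem_shenDomain (hp : (u, s) ∈ shenDomain ε c) :
    ∀ᶠ p in 𝓝 (u, s), p ∈ shenDomain ε c :=
  (isOpen_shenDomain ε c).mem_nhds hp

lemma hasDerivAt_shenRoot_fst (h : 0 < c - u + s ^ 2) :
    HasDerivAt (fun t => shenRoot c t s) (-1 / (2 * shenRoot c u s)) u := by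
  unfold shenRoot
  exact ((((hasDerivAt_id' u).const_sub c).add_const (s ^ 2)).sqrt h.ne').congr_deriv (by simp)

lemma hasDerivAt_shenRoot_snd (h : 0 < c - u + s ^ 2) :
    HasDerivAt (shenRoot c u) (s / shenRoot c u s) s := by
  unfold shenRoot
  refine (((hasDerivAt_pow 2 s).const_add (c - u)).sqrt h.ne').congr_deriv ?_
  field_simp
  push_cast
  ring

lemma hasDerivAt_shenTerm_fst (hp : (u, s) ∈ shenDomain ε c) :
    HasDerivAt (fun t => shenTerm ε c t s)
      (ε * shenTerm ε c u s ^ 2 / (2 * shenRoot c u s)) u := by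
  obtain ⟨hpos, hd⟩ : 0 < c - u + s ^ 2 ∧ ε * shenRoot c u s - s ≠ 0 := hp
  have hq : shenRoot c u s ≠ 0 := Real.sqrt_ne_zero'.2 hpos
  have h := (((hasDerivAt_shenRoot_fst hpos).const_mul ε).sub_const s).fun_inv hd
  rw [show (fun t => shenTerm ε c t s) = fun t => (ε * shenRoot c t s - s)⁻¹ from
    funext fun t => one_div _]
  refine h.congr_deriv ?_
  unfold shenTerm
  field_simp

lemma hasDerivAt_shenTerm_snd (hε : ε ^ 2 = 1) (hp : (u, s) ∈ shenDomain ε c) :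
    HasDerivAt (shenTerm ε c u) (ε * shenTerm ε c u s / shenRoot c u s) s := by
  obtain ⟨hpos, hd⟩ : 0 < c - u + s ^ 2 ∧ ε * shenRoot c u s - s ≠ 0 := hp
  have hq : shenRoot c u s ≠ 0 := Real.sqrt_ne_zero'.2 hpos
  have h := (((hasDerivAt_shenRoot_snd hpos).const_mul ε).fun_sub (hasDerivAt_id' s)).fun_inv hd
  rw [show shenTerm ε c u = fun t => (ε * shenRoot c u t - t)⁻¹ from funext fun t => one_div _]
  refine h.congr_deriv ?_
  beta_reduce
  field_simp
  linear_combination -shenRoot c u s * hε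


lemma isRiccatiAt_shenTerm (hε : ε ^ 2 = 1) (hp : (u, s) ∈ shenDomain ε c) :
    IsRiccatiAt (shenTerm ε c) u s := by
  have h₁ := hasDerivAt_shenTerm_fst hp
  have h₂ := hasDerivAt_shenTerm_snd hε hp
  refine ⟨⟨h₁.differentiableAt, h₂.differentiableAt⟩, ?_⟩
  obtain ⟨hpos, hd⟩ : 0 < c - u + s ^ 2 ∧ ε * shenRoot c u s - s ≠ 0 := hp
  have hq : shenRoot c u s ≠ 0 := Real.sqrt_ne_zero'.2 hpos
  rw [transport, pd1, pd2, h₁.deriv, h₂.deriv, shenTerm]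
  field_simp
  linear_combination (shenRoot c u s) * hε

lemma hasDerivAt_pd1_shenTerm_snd (hε : ε ^ 2 = 1) (hp : (u, s) ∈ shenDomain ε c) :
    HasDerivAt (pd1 (shenTerm ε c) u)
      (ε * shenTerm ε c u s ^ 2 * (2 * ε * shenRoot c u s - s) / (2 * shenRoot c u s ^ 3)) s := by
  have hpos : 0 < c - u + s ^ 2 := hp.1
  have hq : shenRoot c u s ≠ 0 := Real.sqrt_ne_zero'.2 hpos
  have e : pd1 (shenTerm ε c) u =ᶠ[𝓝 s]
      fun t => ε * shenTerm ε c u t ^ 2 / (2 * shenRoot c u t) :=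
    (eventually_mem_shenDomain hp).slice_snd.mono fun t ht => (hasDerivAt_shenTerm_fst ht).deriv
  refine HasDerivAt.congr_of_eventuallyEq ?_ e
  refine ((((hasDerivAt_shenTerm_snd hε hp).fun_pow 2).const_mul ε).fun_div
    ((hasDerivAt_shenRoot_snd hpos).const_mul 2) (by positivity)).congr_deriv ?_
  field_simp
  ring

lemma hasDerivAt_pd2_shenTerm_snd (hε : ε ^ 2 = 1) (hp : (u, s) ∈ shenDomain ε c) :
    HasDerivAt (pd2 (shenTerm ε c) u) (ε / shenRoot c u s ^ 3) s := by
  have hpos : 0 < c - u + s ^ 2 := hp.1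
  have hq : shenRoot c u s ≠ 0 := Real.sqrt_ne_zero'.2 hpos
  have e : pd2 (shenTerm ε c) u =ᶠ[𝓝 s] fun t => ε * shenTerm ε c u t / shenRoot c u t :=
    (eventually_mem_shenDomain hp).slice_snd.mono fun t ht => (hasDerivAt_shenTerm_snd hε ht).deriv
  refine HasDerivAt.congr_of_eventuallyEq ?_ e
  refine (((hasDerivAt_shenTerm_snd hε hp).const_mul ε).fun_div
    (hasDerivAt_shenRoot_snd hpos) hq).congr_deriv ?_
  have hd : ε * shenRoot c u s - s ≠ 0 := hp.2
  rw [shenTerm]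
  field_simp

lemma isProjectiveAt_shenTerm (hε : ε ^ 2 = 1) (hp : (u, s) ∈ shenDomain ε c) :
    IsProjectiveAt (shenTerm ε c) u s := by
  have hq : shenRoot c u s ≠ 0 := Real.sqrt_ne_zero'.2 hp.1
  have hd : ε * shenRoot c u s - s ≠ 0 := hp.2
  simp only [IsProjectiveAt, pd1, pd2]
  rw [(hasDerivAt_shenTerm_fst hp).deriv,
    (hasDerivAt_pd1_shenTerm_snd hε hp).deriv, (hasDerivAt_pd2_shenTerm_snd hε hp).deriv, shenTerm]
  field_simp
  linear_combination ε * shenRoot c u s ^ 2 * hε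

end ShenTerm

section ShenSolution

variable {ε c₁ c₂ a u s : ℝ}

lemma isProjectiveAt_shenTerm_sub (hε : ε ^ 2 = 1) (h₁ : (u, s) ∈ shenDomain ε c₁)
    (h₂ : (u, s) ∈ shenDomain ε c₂) :
    IsProjectiveAt (fun u s => a * (shenTerm ε c₁ u s - shenTerm ε c₂ u s)) u s :=
  IsProjectiveAt.const_mul_sub
    ((eventually_mem_shenDomain h₁).mono fun _ hp => (isRiccatiAt_shenTerm hε hp).1)
    ((eventually_mem_shenDomain h₂).mono fun _ hp => (isRiccatiAt_shenTerm hε hp).1)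
    (hasDerivAt_pd1_shenTerm_snd hε h₁).differentiableAt
    (hasDerivAt_pd2_shenTerm_snd hε h₁).differentiableAt
    (hasDerivAt_pd1_shenTerm_snd hε h₂).differentiableAt
    (hasDerivAt_pd2_shenTerm_snd hε h₂).differentiableAt
    (isProjectiveAt_shenTerm hε h₁) (isProjectiveAt_shenTerm hε h₂)

lemma psi_sq_sub_transport_psi_shenTerm_sub (hε : ε ^ 2 = 1) (h₁ : (u, s) ∈ shenDomain ε c₁)
    (h₂ : (u, s) ∈ shenDomain ε c₂) (hne : a * (shenTerm ε c₁ u s - shenTerm ε c₂ u s) ≠ 0) :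
    psi (fun u s => a * (shenTerm ε c₁ u s - shenTerm ε c₂ u s)) u s ^ 2
        - transport (psi fun u s => a * (shenTerm ε c₁ u s - shenTerm ε c₂ u s)) u s
      = -(shenTerm ε c₁ u s - shenTerm ε c₂ u s) ^ 2 / 4 :=
  psi_sq_sub_transport_psi_const_mul_sub
    ((eventually_mem_shenDomain h₁).mono fun _ hp => isRiccatiAt_shenTerm hε hp)
    ((eventually_mem_shenDomain h₂).mono fun _ hp => isRiccatiAt_shenTerm hε hp) hne

end ShenSolution

theorem stmt_18_general (κ K : ℝ) (hκ : 0 < κ) (σ : ℝ) (hσdef : σ = K / κ) (hσ : σ < 0)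
    (C D : ℝ) (ε : ℝ) (hε : ε = 1 ∨ ε = -1)
    (φ : ℝ → ℝ → ℝ)
    (hφ : ∀ u s : ℝ, φ u s = (1 / (2 * Real.sqrt (-σ)))
        * (1 / (ε * Real.sqrt (C + 2 * Real.sqrt (-σ) * D - u + s ^ 2) - s)
          - 1 / (ε * Real.sqrt (C - 2 * Real.sqrt (-σ) * D - u + s ^ 2) - s))) :
    ∀ u s : ℝ,
      0 < C + 2 * Real.sqrt (-σ) * D - u + s ^ 2 →
      0 < C - 2 * Real.sqrt (-σ) * D - u + s ^ 2 →
      ε * Real.sqrt (C + 2 * Real.sqrt (-σ) * D - u + s ^ 2) - s ≠ 0 →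
      ε * Real.sqrt (C - 2 * Real.sqrt (-σ) * D - u + s ^ 2) - s ≠ 0 →
      0 < φ u s →
      (pd2 (pd2 φ) u s = 2 * (pd1 φ u s - s * pd2 (pd1 φ) u s)
        ∧ κ * ((psi φ u s) ^ 2 - (pd2 (psi φ) u s + 2 * s * pd1 (psi φ) u s))
          = K * (φ u s) ^ 2) := by
  intro u s h₁ h₂ hd₁ hd₂ hφpos
  have hε_sq : ε ^ 2 = 1 := by rcases hε with rfl | rfl <;> norm_num
  have hφeq : φ = fun u s => 1 / (2 * √(-σ)) *
      (shenTerm ε (C + 2 * √(-σ) * D) u s - shenTerm ε (C - 2 * √(-σ) * D) u s) :=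
    funext fun u => funext (hφ u)
  subst hφeq
  refine ⟨isProjectiveAt_shenTerm_sub hε_sq ⟨h₁, hd₁⟩ ⟨h₂, hd₂⟩, ?_⟩
  have hψ := psi_sq_sub_transport_psi_shenTerm_sub hε_sq ⟨h₁, hd₁⟩ ⟨h₂, hd₂⟩ hφpos.ne'
  rw [transport] at hψ
  have hK : K = κ * σ := by rw [hσdef]; field_simp
  have hr : √(-σ) ^ 2 = -σ := Real.sq_sqrt (by linarith)
  have hσ₀ : σ ≠ 0 := hσ.ne
  beta_reduce
  rw [hψ, hK, mul_pow, div_pow, mul_pow, hr]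
  field_simp
  ring

/-- The case `D ≠ 0`, `σ < 0` (Shen's projectively flat metrics): the explicit `φ`
below satisfies the projective PDE `φ₂₂ = 2(φ₁ − s·φ₁₂)` and the Einstein PDE
with `μ = 0`: `κ·[ψ² − (ψ₂ + 2s·ψ₁)] = K·φ²`. -/
theorem stmt_18 (κ K : ℝ) (hκ : 0 < κ) (σ : ℝ) (hσdef : σ = K / κ) (hσ : σ < 0)
    (C D : ℝ) (hD : D ≠ 0) (ε : ℝ) (hε : ε = 1 ∨ ε = -1)
    (φ : ℝ → ℝ → ℝ)
    (hφ : ∀ u s : ℝ, φ u s = (1 / (2 * Real.sqrt (-σ)))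
        * (1 / (ε * Real.sqrt (C + 2 * Real.sqrt (-σ) * D - u + s ^ 2) - s)
          - 1 / (ε * Real.sqrt (C - 2 * Real.sqrt (-σ) * D - u + s ^ 2) - s))) :
    ∀ u s : ℝ,
      0 < C + 2 * Real.sqrt (-σ) * D - u + s ^ 2 →
      0 < C - 2 * Real.sqrt (-σ) * D - u + s ^ 2 →
      ε * Real.sqrt (C + 2 * Real.sqrt (-σ) * D - u + s ^ 2) - s ≠ 0 →
      ε * Real.sqrt (C - 2 * Real.sqrt (-σ) * D - u + s ^ 2) - s ≠ 0 →
      0 < φ u s →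
      (pd2 (pd2 φ) u s = 2 * (pd1 φ u s - s * pd2 (pd1 φ) u s)
        ∧ κ * ((psi φ u s) ^ 2 - (pd2 (psi φ) u s + 2 * s * pd1 (psi φ) u s))
          = K * (φ u s) ^ 2) :=
  stmt_18_general κ K hκ σ hσdef hσ C D ε hε φ hφ
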